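/- arXiv:1804.05489 — 2 statements merged into one kernel-verified Lean document; each statement's English description precedes it below -/
import Mathlib

section
/- Let d = 2 and V(x) = a·x₁/⟨x⟩² for x = (x₁,x₂) ∈ ℝ², where a ∈ ℝ. Then for any unit vector ξ ∈ ℝ² and x ⊥ ξ, ∫_{-∞}^{∞} (V(x + tξ) − V(tξ)) dt = aπ·x₁/⟨x⟩. -/
open MeasureTheory Real
open scoped RealInnerProductSpace

/-!
Put `c = 1 + ‖x‖²`. As `x ⊥ ξ` and `‖ξ‖ = 1`, `‖x + tξ‖² = ‖x‖² + t²`, so the integrand is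
`a x₁ / (c + t²) + a ξ₁ t ((c + t²)⁻¹ - (1 + t²)⁻¹)`. The first term integrates to `a x₁ π / √c`
by rescaling `∫ (1 + t²)⁻¹ = π`; the second is `O(|t|⁻³)`, hence integrable, and odd, so it
integrates to zero.
-/

theorem Function.Odd.integral_eq_zero {G E : Type*} [MeasurableSpace G] [AddGroup G]
    [MeasurableNeg G] [NormedAddCommGroup E] [NormedSpace ℝ E] {μ : Measure G}
    [μ.IsNegInvariant] {f : G → E} (hf : f.Odd) : ∫ x, f x ∂μ = 0 := by
  have h : ∫ x, f x ∂μ = -∫ x, f x ∂μ := by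
    simpa only [hf _, integral_neg] using (integral_neg_eq_self f μ).symm
  have h2 : (2 : ℝ) • ∫ x, f x ∂μ = 0 := by
    rw [two_smul]
    nth_rw 2 [h]
    exact add_neg_cancel _
  exact (smul_eq_zero.mp h2).resolve_left two_ne_zero

lemma inv_add_sq_eq {c : ℝ} (hc : 0 < c) (t : ℝ) :
    (c + t ^ 2)⁻¹ = c⁻¹ * (1 + (t / √c) ^ 2)⁻¹ := by
  rw [div_pow, sq_sqrt hc.le, ← mul_inv]
  congr 1
  field_simp

lemma integrable_inv_add_sq {c : ℝ} (hc : 0 < c) :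
    Integrable fun t : ℝ ↦ (c + t ^ 2)⁻¹ := by
  simpa only [← inv_add_sq_eq hc] using
    (integrable_inv_one_add_sq.comp_div (sqrt_pos.2 hc).ne').const_mul c⁻¹

lemma integral_inv_add_sq {c : ℝ} (hc : 0 < c) :
    ∫ t : ℝ, (c + t ^ 2)⁻¹ = π / √c := by
  have hs : 0 < √c := sqrt_pos.2 hc
  simp_rw [inv_add_sq_eq hc]
  rw [integral_const_mul, Measure.integral_comp_div (fun u ↦ (1 + u ^ 2)⁻¹),
    integral_univ_inv_one_add_sq, abs_of_pos hs, smul_eq_mul]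
  field_simp
  rw [sq_sqrt hc.le]

lemma abs_mul_inv_add_sq_le {b : ℝ} (hb : 0 < b) (t : ℝ) :
    |t| * (b + t ^ 2)⁻¹ ≤ (2 * √b)⁻¹ := by
  have hs : 0 < √b := sqrt_pos.2 hb
  have h : 2 * √b * |t| ≤ b + t ^ 2 := by
    nlinarith [sq_nonneg (√b - |t|), sq_sqrt hb.le, sq_abs t]
  rw [mul_inv_le_iff₀ (by positivity), inv_mul_eq_div, le_div_iff₀ (by positivity)]
  linarith

lemma integrable_mul_sub_inv_add_sq {b c : ℝ} (hb : 0 < b) (hc : 0 < c) :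
    Integrable fun t : ℝ ↦ t * ((b + t ^ 2)⁻¹ - (c + t ^ 2)⁻¹) := by
  refine ((integrable_inv_add_sq hc).const_mul (|c - b| * (2 * √b)⁻¹)).mono'
    (by fun_prop) (Filter.Eventually.of_forall fun t ↦ ?_)
  have hb' : 0 < b + t ^ 2 := by positivity
  have hc' : 0 < c + t ^ 2 := by positivity
  have h : t * ((b + t ^ 2)⁻¹ - (c + t ^ 2)⁻¹) = (c - b) * (t * (b + t ^ 2)⁻¹) * (c + t ^ 2)⁻¹ := by
    field_simp
    ring
  simp only [h, norm_mul, norm_inv, Real.norm_eq_abs, abs_of_pos hb', abs_of_pos hc']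
  gcongr
  exact abs_mul_inv_add_sq_le hb t

lemma integral_mul_sub_inv_add_sq (b c : ℝ) :
    ∫ t : ℝ, t * ((b + t ^ 2)⁻¹ - (c + t ^ 2)⁻¹) = 0 :=
  Function.Odd.integral_eq_zero fun t ↦ by simp only [neg_sq, neg_mul]

theorem stmt_9 (a : ℝ) (V : EuclideanSpace ℝ (Fin 2) → ℝ)
    (hV : ∀ x : EuclideanSpace ℝ (Fin 2), V x = a * x 0 / (1 + ‖x‖ ^ 2))
    (ξ x : EuclideanSpace ℝ (Fin 2)) (hξ : ‖ξ‖ = 1) (hperp : ⟪x, ξ⟫ = 0) :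
    ∫ t : ℝ, (V (x + t • ξ) - V (t • ξ))
      = a * π * x 0 / Real.sqrt (1 + ‖x‖ ^ 2) := by
  have hc : 0 < 1 + ‖x‖ ^ 2 := by positivity
  have hnorm_smul (t : ℝ) : ‖t • ξ‖ ^ 2 = t ^ 2 := by
    rw [norm_smul, hξ, mul_one, Real.norm_eq_abs, sq_abs]
  have hnorm_add (t : ℝ) : ‖x + t • ξ‖ ^ 2 = ‖x‖ ^ 2 + t ^ 2 := by
    rw [norm_add_sq_real, real_inner_smul_right, hperp, mul_zero, mul_zero, add_zero, hnorm_smul]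
  have hsplit (t : ℝ) : V (x + t • ξ) - V (t • ξ) = a * x 0 * ((1 + ‖x‖ ^ 2) + t ^ 2)⁻¹
      + a * ξ 0 * (t * (((1 + ‖x‖ ^ 2) + t ^ 2)⁻¹ - (1 + t ^ 2)⁻¹)) := by
    simp only [hV, hnorm_add, hnorm_smul, PiLp.add_apply, PiLp.smul_apply, smul_eq_mul]
    ring
  simp_rw [hsplit]
  rw [integral_add ((integrable_inv_add_sq hc).const_mul _)
      ((integrable_mul_sub_inv_add_sq hc one_pos).const_mul _),
    integral_const_mul, integral_const_mul, integral_inv_add_sq hc,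
    integral_mul_sub_inv_add_sq]
  ring
end

section
/- Let V(x) = a·x₁/⟨x⟩² on ℝ². For ξ = (cos θ, sin θ) and x = (−ω sin θ, ω cos θ) with θ ∈ [0, 2π), ω ∈ ℝ, the function ψ(x,ξ) = ∫_{-∞}^{∞} (V(x+tξ) − V(tξ)) dt equals −aπ sin θ · ω/⟨ω⟩, where ⟨ω⟩ = (1+ω²)^{1/2}. -/
open MeasureTheory Real

lemma odd_part_zero (k : ℝ) :
    ∫ t : ℝ, (t * (k + t ^ 2)⁻¹ - t * (1 + t ^ 2)⁻¹) = 0 := by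
  have h := MeasureTheory.Measure.integral_comp_mul_left
    (fun t : ℝ => t * (k + t ^ 2)⁻¹ - t * (1 + t ^ 2)⁻¹) (-1)
  have hg : ∀ x : ℝ, ((-1 : ℝ) * x) * (k + ((-1 : ℝ) * x) ^ 2)⁻¹
      - ((-1 : ℝ) * x) * (1 + ((-1 : ℝ) * x) ^ 2)⁻¹
      = -(x * (k + x ^ 2)⁻¹ - x * (1 + x ^ 2)⁻¹) := by
    intro x
    have : ((-1 : ℝ) * x) ^ 2 = x ^ 2 := by ring
    rw [this]; ring
  simp only [hg, integral_neg] at h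
  simp only [smul_eq_mul] at h
  norm_num at h
  linarith

lemma main_integral (k : ℝ) (hk : 0 < k) :
    ∫ t : ℝ, (k + t ^ 2)⁻¹ = π / Real.sqrt k := by
  set s : ℝ := Real.sqrt k with hsdef
  have hs : 0 < s := Real.sqrt_pos.2 hk
  have hs2 : s ^ 2 = k := Real.sq_sqrt hk.le
  have hrw : ∀ t : ℝ, (k + t ^ 2)⁻¹ = k⁻¹ * (1 + (s⁻¹ * t) ^ 2)⁻¹ := by
    intro t
    have : k + t ^ 2 = k * (1 + (s⁻¹ * t) ^ 2) := by
      field_simp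
      nlinarith [hs2]
    rw [this, mul_inv]
  simp_rw [hrw]
  rw [integral_const_mul]
  rw [MeasureTheory.Measure.integral_comp_inv_mul_left (fun u : ℝ => (1 + u ^ 2)⁻¹) s,
    integral_univ_inv_one_add_sq, smul_eq_mul, abs_of_pos hs]
  field_simp
  nlinarith [hs2, Real.pi_pos]

lemma integrable_main (k : ℝ) (hk : 0 < k) :
    Integrable fun t : ℝ => (k + t ^ 2)⁻¹ := by
  set s : ℝ := Real.sqrt k with hsdef
  have hs : 0 < s := Real.sqrt_pos.2 hk
  have hs2 : s ^ 2 = k := Real.sq_sqrt hk.le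
  have hrw : (fun t : ℝ => (k + t ^ 2)⁻¹)
      = fun t : ℝ => k⁻¹ * (1 + (s⁻¹ * t) ^ 2)⁻¹ := by
    funext t
    have : k + t ^ 2 = k * (1 + (s⁻¹ * t) ^ 2) := by
      field_simp
      nlinarith [hs2]
    rw [this, mul_inv]
  rw [hrw]
  exact (((integrable_comp_mul_left_iff (fun u : ℝ => (1 + u ^ 2)⁻¹)
    (inv_ne_zero hs.ne')).2 integrable_inv_one_add_sq).const_mul k⁻¹)

lemma integrable_odd (k : ℝ) (hk1 : 1 ≤ k) :
    Integrable fun t : ℝ => t * (k + t ^ 2)⁻¹ - t * (1 + t ^ 2)⁻¹ := by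
  have hk : (0 : ℝ) < k := by linarith
  have cont : Continuous fun t : ℝ => t * (k + t ^ 2)⁻¹ - t * (1 + t ^ 2)⁻¹ := by
    have c1 : Continuous fun t : ℝ => (k + t ^ 2)⁻¹ :=
      (continuous_const.add (continuous_pow 2)).inv₀ fun t => (by positivity : k + t ^ 2 ≠ 0)
    have c2 : Continuous fun t : ℝ => ((1 : ℝ) + t ^ 2)⁻¹ :=
      (continuous_const.add (continuous_pow 2)).inv₀ fun t => (by positivity : (1 : ℝ) + t ^ 2 ≠ 0)
    exact (continuous_id.mul c1).sub (continuous_id.mul c2)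
  refine (((integrable_inv_one_add_sq).const_mul (k - 1)).mono'
    cont.aestronglyMeasurable (Filter.Eventually.of_forall fun t => ?_))
  have hA : (0 : ℝ) < k + t ^ 2 := by positivity
  have hB : (0 : ℝ) < 1 + t ^ 2 := by positivity
  have heq : t * (k + t ^ 2)⁻¹ - t * (1 + t ^ 2)⁻¹
      = (1 - k) * (t / ((k + t ^ 2) * (1 + t ^ 2))) := by
    field_simp
    ring
  rw [Real.norm_eq_abs, heq, abs_mul, abs_div, abs_of_pos (mul_pos hA hB),
    show |1 - k| = k - 1 by rw [abs_sub_comm]; exact abs_of_nonneg (by linarith)]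
  have h1 : |t| ≤ k + t ^ 2 := by
    nlinarith [sq_nonneg (|t| - 1), sq_abs t, abs_nonneg t]
  have hrhs : (k - 1) * (1 + t ^ 2)⁻¹
      = (k - 1) * ((k + t ^ 2) / ((k + t ^ 2) * (1 + t ^ 2))) := by
    field_simp
  rw [hrhs]
  gcongr

theorem stmt_10 (a θ ω : ℝ) (hθ : 0 ≤ θ) (hθ' : θ < 2 * π)
    (V : ℝ → ℝ → ℝ) (hV : ∀ x₁ x₂, V x₁ x₂ = a * x₁ / (1 + x₁ ^ 2 + x₂ ^ 2)) :
    ∫ t : ℝ, (V (-ω * Real.sin θ + t * Real.cos θ) (ω * Real.cos θ + t * Real.sin θ)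
        - V (t * Real.cos θ) (t * Real.sin θ))
      = -a * π * Real.sin θ * ω / Real.sqrt (1 + ω ^ 2) := by
  have hk : (0 : ℝ) < 1 + ω ^ 2 := by positivity
  have hk1 : (1 : ℝ) ≤ 1 + ω ^ 2 := by nlinarith [sq_nonneg ω]
  have hpc : Real.sin θ ^ 2 + Real.cos θ ^ 2 = 1 := Real.sin_sq_add_cos_sq θ
  have key : ∀ t : ℝ,
      V (-ω * Real.sin θ + t * Real.cos θ) (ω * Real.cos θ + t * Real.sin θ)
        - V (t * Real.cos θ) (t * Real.sin θ)
      = (a * Real.cos θ) * (t * ((1 + ω ^ 2) + t ^ 2)⁻¹ - t * (1 + t ^ 2)⁻¹)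
        - (a * ω * Real.sin θ) * ((1 + ω ^ 2) + t ^ 2)⁻¹ := by
    intro t
    rw [hV, hV]
    have h1 : 1 + (-ω * Real.sin θ + t * Real.cos θ) ^ 2
        + (ω * Real.cos θ + t * Real.sin θ) ^ 2 = (1 + ω ^ 2) + t ^ 2 := by
      nlinarith [hpc]
    have h2 : 1 + (t * Real.cos θ) ^ 2 + (t * Real.sin θ) ^ 2 = 1 + t ^ 2 := by
      nlinarith [hpc]
    rw [h1, h2]
    have hk0 : (1 + ω ^ 2) + t ^ 2 ≠ 0 := by positivity
    have h10 : (1 : ℝ) + t ^ 2 ≠ 0 := by positivity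
    field_simp
    ring
  simp_rw [key]
  rw [integral_sub ((integrable_odd _ hk1).const_mul _)
    ((integrable_main _ hk).const_mul _),
    integral_const_mul, integral_const_mul, odd_part_zero, main_integral _ hk]
  have hs : (0 : ℝ) < Real.sqrt (1 + ω ^ 2) := Real.sqrt_pos.2 hk
  rw [mul_zero, zero_sub]
  field_simp
end
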